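/- If φ : [0,1] → [0,∞] is continuous, strictly decreasing, convex, with φ(1) = 0, then C(u,v) = φ^{[-1]}(φ(u) + φ(v)) is a copula, where φ^{[-1]} is the pseudo-inverse of φ (equal to φ^{-1} on [0, φ(0)] and 0 beyond). -/

import Mathlib

open ENNReal

/-- A bivariate copula: a grounded, 2-increasing function on [0,1]²
with uniform margins. -/
structure Copula where
  toFun : ℝ → ℝ → ℝ
  grounded_left : ∀ v ∈ Set.Icc (0:ℝ) 1, toFun 0 v = 0
  grounded_right : ∀ u ∈ Set.Icc (0:ℝ) 1, toFun u 0 = 0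
  margin_left : ∀ u ∈ Set.Icc (0:ℝ) 1, toFun u 1 = u
  margin_right : ∀ v ∈ Set.Icc (0:ℝ) 1, toFun 1 v = v
  twoIncreasing : ∀ u₁ u₂ v₁ v₂ : ℝ, 0 ≤ u₁ → u₁ ≤ u₂ → u₂ ≤ 1 →
    0 ≤ v₁ → v₁ ≤ v₂ → v₂ ≤ 1 →
    0 ≤ toFun u₂ v₂ - toFun u₁ v₂ - toFun u₂ v₁ + toFun u₁ v₁

/-- Pseudo-inverse of a generator φ : [0,1] → [0,∞]:
φ^{[-1]}(t) = sup{x ∈ [0,1] : t ≤ φ(x)} (which is φ⁻¹(t) on [0,φ(0)] and 0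
for t ≥ φ(0)). -/
noncomputable def generatorPseudoInverse (φ : ℝ → ℝ≥0∞) (t : ℝ≥0∞) : ℝ :=
  sSup {x : ℝ | x ∈ Set.Icc (0:ℝ) 1 ∧ t ≤ φ x}

/-!
The pseudo-inverse `ψ = φ^{[-1]}` is antitone, and convex along with `φ` because
`φ ∘ ψ = min id (φ 0) ≤ id`; so its increments `ψ (t + w) - ψ t` grow with `t`. As
`ψ (φ (ψ m) + s) = ψ (m + s)`, taking `s = φ v₁ - φ v₂` gives `C(u, v₁) = ψ (φ (C(u, v₂)) + s)`,
and the growth of increments between the points `φ u₂ ≤ φ u₁` is the rectangle inequality.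
-/

open Set

theorem ConvexOn.increment_le_increment {𝕜 : Type*} [Field 𝕜] [LinearOrder 𝕜]
    [IsStrictOrderedRing 𝕜] {s : Set 𝕜} {f : 𝕜 → 𝕜} (hf : ConvexOn 𝕜 s f) {p q w : 𝕜}
    (hp : p ∈ s) (hqw : q + w ∈ s) (hpq : p ≤ q) (hw : 0 ≤ w) :
    f (p + w) - f p ≤ f (q + w) - f q := by
  rcases hpq.eq_or_lt with rfl | hpq
  · exact le_rfl
  rcases hw.eq_or_lt with rfl | hw
  · simp
  have hq := hf.secant_mono_aux1 hp hqw hpq (lt_add_of_pos_right q hw)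
  have hpw := hf.secant_mono_aux1 hp hqw (lt_add_of_pos_right p hw) (by linarith)
  have hscaled : (q + w - p) * (f (p + w) - f p) ≤ (q + w - p) * (f (q + w) - f q) := by
    linear_combination hq + hpw
  exact le_of_mul_le_mul_left hscaled (by linarith)

theorem Antitone.increment_le_increment_of_convexOn_comp_ofReal {ψ : ℝ≥0∞ → ℝ}
    (hψ : Antitone ψ) (hconv : ConvexOn ℝ (Ici 0) (ψ ∘ ENNReal.ofReal)) {p q : ℝ≥0∞}
    (hpq : p ≤ q) (w : ℝ≥0∞) : ψ (p + w) - ψ p ≤ ψ (q + w) - ψ q := by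
  rcases eq_or_ne q ∞ with rfl | hq
  · simpa using hψ (le_self_add : p ≤ p + w)
  rcases eq_or_ne w ∞ with rfl | hw
  · simp only [add_top]
    linarith [hψ hpq]
  lift q to NNReal using hq
  lift p to NNReal using ne_top_of_le_ne_top coe_ne_top hpq
  lift w to NNReal using hw
  simpa [← ENNReal.ofReal_coe_nnreal, ENNReal.ofReal_add] using
    hconv.increment_le_increment (p := p) (q := q) (w := w) p.2
      (add_nonneg q.2 w.2) (by exact_mod_cast hpq) w.2

structure IsArchimedeanGenerator (φ : ℝ → ℝ≥0∞) : Prop where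
  continuousOn : ContinuousOn φ (Icc 0 1)
  strictAntiOn : StrictAntiOn φ (Icc 0 1)
  convex : ∀ x ∈ Icc (0 : ℝ) 1, ∀ y ∈ Icc (0 : ℝ) 1,
    ∀ a b : NNReal, a + b = 1 →
      φ ((a : ℝ) * x + (b : ℝ) * y) ≤ (a : ℝ≥0∞) * φ x + (b : ℝ≥0∞) * φ y
  map_one : φ 1 = 0

namespace generatorPseudoInverse

variable {φ : ℝ → ℝ≥0∞}

theorem mem_Icc (t : ℝ≥0∞) : generatorPseudoInverse φ t ∈ Icc (0 : ℝ) 1 :=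
  ⟨Real.sSup_nonneg fun _ hx ↦ hx.1.1, Real.sSup_le (fun _ hx ↦ hx.1.2) zero_le_one⟩

theorem antitone : Antitone (generatorPseudoInverse φ) := fun _ _ h ↦
  Real.sSup_le (fun _ hx ↦ le_csSup ⟨1, fun _ hy ↦ hy.1.2⟩ ⟨hx.1, h.trans hx.2⟩)
    (mem_Icc _).1

theorem apply_generator (hanti : StrictAntiOn φ (Icc 0 1)) {u : ℝ} (hu : u ∈ Icc (0 : ℝ) 1) :
    generatorPseudoInverse φ (φ u) = u := by
  have hlevel : {x : ℝ | x ∈ Icc (0 : ℝ) 1 ∧ φ u ≤ φ x} = Icc 0 u := by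
    ext x
    refine ⟨fun ⟨hx, hle⟩ ↦ ⟨hx.1, hanti.le_iff_ge hu hx |>.mp hle⟩, fun hx ↦ ?_⟩
    have hx' : x ∈ Icc (0 : ℝ) 1 := ⟨hx.1, hx.2.trans hu.2⟩
    exact ⟨hx', hanti.antitoneOn hx' hu hx.2⟩
  rw [generatorPseudoInverse, hlevel, csSup_Icc hu.1]

theorem eq_zero_of_le (hanti : StrictAntiOn φ (Icc 0 1)) {t : ℝ≥0∞} (h : φ 0 ≤ t) :
    generatorPseudoInverse φ t = 0 :=
  le_antisymm ((antitone h).trans_eq (apply_generator hanti ⟨le_rfl, zero_le_one⟩))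
    (mem_Icc t).1

theorem generator_apply (hcont : ContinuousOn φ (Icc 0 1)) (hanti : StrictAntiOn φ (Icc 0 1))
    (hφ1 : φ 1 = 0) (t : ℝ≥0∞) : φ (generatorPseudoInverse φ t) = min t (φ 0) := by
  rcases le_total t (φ 0) with h | h
  · obtain ⟨x, hx, rfl⟩ := intermediate_value_Icc' zero_le_one hcont
      (show t ∈ Icc (φ 1) (φ 0) from ⟨hφ1 ▸ zero_le, h⟩)
    rw [apply_generator hanti hx, min_eq_left h]
  · rw [eq_zero_of_le hanti h, min_eq_right h]

theorem generator_apply_add (hcont : ContinuousOn φ (Icc 0 1))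
    (hanti : StrictAntiOn φ (Icc 0 1)) (hφ1 : φ 1 = 0) (t s : ℝ≥0∞) :
    generatorPseudoInverse φ (φ (generatorPseudoInverse φ t) + s) =
      generatorPseudoInverse φ (t + s) := by
  rw [generator_apply hcont hanti hφ1]
  rcases le_total t (φ 0) with h | h
  · rw [min_eq_left h]
  · rw [min_eq_right h, eq_zero_of_le hanti le_self_add,
      eq_zero_of_le hanti (h.trans le_self_add)]

theorem convexOn_comp_ofReal (hφ : IsArchimedeanGenerator φ) :
    ConvexOn ℝ (Ici 0) (generatorPseudoInverse φ ∘ ENNReal.ofReal) := by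
  refine ⟨convex_Ici 0, fun s hs t ht a b ha hb hab ↦ ?_⟩
  set x := generatorPseudoInverse φ (ENNReal.ofReal s)
  set y := generatorPseudoInverse φ (ENNReal.ofReal t)
  have hx := mem_Icc (φ := φ) (ENNReal.ofReal s)
  have hy := mem_Icc (φ := φ) (ENNReal.ofReal t)
  have hxy : a * x + b * y ∈ Icc (0 : ℝ) 1 :=
    convex_Icc 0 1 hx hy ha hb hab
  have hφxy : φ (a * x + b * y) ≤ ENNReal.ofReal (a * s + b * t) := by
    calc φ (a * x + b * y)
        ≤ ENNReal.ofReal a * φ x + ENNReal.ofReal b * φ y := by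
          have := hφ.convex x hx y hy a.toNNReal b.toNNReal
            (by rw [← Real.toNNReal_add ha hb, hab, Real.toNNReal_one])
          rwa [Real.coe_toNNReal _ ha, Real.coe_toNNReal _ hb] at this
      _ ≤ ENNReal.ofReal a * ENNReal.ofReal s + ENNReal.ofReal b * ENNReal.ofReal t := by
          rw [generator_apply hφ.continuousOn hφ.strictAntiOn hφ.map_one,
            generator_apply hφ.continuousOn hφ.strictAntiOn hφ.map_one]
          gcongr <;> exact min_le_left _ _
      _ = ENNReal.ofReal (a * s + b * t) := by
          rw [ENNReal.ofReal_add (mul_nonneg ha hs) (mul_nonneg hb ht), ENNReal.ofReal_mul ha,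
            ENNReal.ofReal_mul hb]
  calc generatorPseudoInverse φ (ENNReal.ofReal (a * s + b * t))
      ≤ generatorPseudoInverse φ (φ (a * x + b * y)) := antitone hφxy
    _ = a * x + b * y := apply_generator hφ.strictAntiOn hxy

theorem apply_generator_add_sub_le (hφ : IsArchimedeanGenerator φ) {a b : ℝ}
    (ha : a ∈ Icc (0 : ℝ) 1) (hb : b ∈ Icc (0 : ℝ) 1) (hab : a ≤ b) (w : ℝ≥0∞) :
    generatorPseudoInverse φ (φ b + w) - generatorPseudoInverse φ (φ a + w) ≤ b - a := by
  have h := antitone.increment_le_increment_of_convexOn_comp_ofReal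
    (convexOn_comp_ofReal hφ) (hφ.strictAntiOn.antitoneOn ha hb hab) w
  rw [apply_generator hφ.strictAntiOn ha, apply_generator hφ.strictAntiOn hb] at h
  linarith

end generatorPseudoInverse

namespace IsArchimedeanGenerator

open generatorPseudoInverse

variable {φ : ℝ → ℝ≥0∞}

theorem twoIncreasing (hφ : IsArchimedeanGenerator φ) {u₁ u₂ v₁ v₂ : ℝ} (hu₁ : 0 ≤ u₁)
    (hu : u₁ ≤ u₂) (hu₂ : u₂ ≤ 1) (hv₁ : 0 ≤ v₁) (hv : v₁ ≤ v₂) (hv₂ : v₂ ≤ 1) :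
    0 ≤ generatorPseudoInverse φ (φ u₂ + φ v₂) - generatorPseudoInverse φ (φ u₁ + φ v₂) -
      generatorPseudoInverse φ (φ u₂ + φ v₁) + generatorPseudoInverse φ (φ u₁ + φ v₁) := by
  have hφu := hφ.strictAntiOn.antitoneOn ⟨hu₁, hu.trans hu₂⟩ ⟨hu₁.trans hu, hu₂⟩ hu
  have hφv := hφ.strictAntiOn.antitoneOn ⟨hv₁, hv.trans hv₂⟩ ⟨hv₁.trans hv, hv₂⟩ hv
  have hshift (u : ℝ) : generatorPseudoInverse φ
      (φ (generatorPseudoInverse φ (φ u + φ v₂)) + (φ v₁ - φ v₂)) =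
        generatorPseudoInverse φ (φ u + φ v₁) := by
    rw [generator_apply_add hφ.continuousOn hφ.strictAntiOn hφ.map_one, add_assoc,
      add_tsub_cancel_of_le hφv]
  have h := apply_generator_add_sub_le hφ (mem_Icc _) (mem_Icc _)
    (antitone (φ := φ) (by gcongr : φ u₂ + φ v₂ ≤ φ u₁ + φ v₂)) (φ v₁ - φ v₂)
  rw [hshift, hshift] at h
  linarith

noncomputable def copula (hφ : IsArchimedeanGenerator φ) : Copula where
  toFun u v := generatorPseudoInverse φ (φ u + φ v)
  grounded_left _ _ := eq_zero_of_le hφ.strictAntiOn le_self_add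
  grounded_right _ _ := eq_zero_of_le hφ.strictAntiOn le_add_self
  margin_left u hu := by rw [hφ.map_one, add_zero, apply_generator hφ.strictAntiOn hu]
  margin_right v hv := by rw [hφ.map_one, zero_add, apply_generator hφ.strictAntiOn hv]
  twoIncreasing _ _ _ _ := hφ.twoIncreasing

end IsArchimedeanGenerator

/-- if φ : [0,1] → [0,∞] is continuous, strictly decreasing,
convex, with φ(1) = 0, then C(u,v) = φ^{[-1]}(φ(u) + φ(v)) is a copula. -/
theorem archimedean_construction_is_copula
    (φ : ℝ → ℝ≥0∞)
    (hcont : ContinuousOn φ (Set.Icc (0:ℝ) 1))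
    (hanti : StrictAntiOn φ (Set.Icc (0:ℝ) 1))
    (hconvex : ∀ x ∈ Set.Icc (0:ℝ) 1, ∀ y ∈ Set.Icc (0:ℝ) 1,
      ∀ a b : NNReal, a + b = 1 →
        φ ((a : ℝ) * x + (b : ℝ) * y) ≤ (a : ℝ≥0∞) * φ x + (b : ℝ≥0∞) * φ y)
    (hφ1 : φ 1 = 0) :
    ∃ C : Copula, ∀ u ∈ Set.Icc (0:ℝ) 1, ∀ v ∈ Set.Icc (0:ℝ) 1,
      C.toFun u v = generatorPseudoInverse φ (φ u + φ v) :=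
  ⟨IsArchimedeanGenerator.copula ⟨hcont, hanti, hconvex, hφ1⟩, fun _ _ _ _ ↦ rfl⟩
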